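/- Let D = {(x, L) ∈ C ∩ ℤ¹⁰ : ∂₂(x) = σ(∂₃(x))}, where σ(p,q) = (q,p); explicitly, D consists of the lattice points of C whose ℤ⁹-part x satisfies b₁+b₂ = c₃+a₁ and b₃+c₁ = c₁+c₂. Then D is generated as an additive monoid by its elements whose level coordinate L is 1, 2, or 3; i.e., every element of D is a finite sum of elements of D of level at most 3. -/

import Mathlib

/-- The nine generators `g_X, g_S, g_T, g₁₂, g₂₃, g₃₁, g₂₁, g₃₂, g₁₃` of the
trinode cone in `ℤ¹⁰ = ℤ⁹ × ℤ` (first nine coordinates ordered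
`(a₁,b₁,c₁,a₂,a₃,b₂,b₃,c₂,c₃)`, last coordinate the level). -/
def cbGens : Fin 9 → Fin 10 → ℤ :=
  ![![0, 0, 0, 0, 0, 0, 0, 0, 0, 1],  -- g_X
    ![0, 0, 0, 1, 0, 1, 0, 1, 0, 1],  -- g_S
    ![0, 0, 0, 0, 1, 0, 1, 0, 1, 1],  -- g_T
    ![0, 0, 0, 1, 0, 0, 1, 0, 0, 1],  -- g₁₂
    ![0, 0, 0, 0, 0, 1, 0, 0, 1, 1],  -- g₂₃
    ![0, 0, 0, 0, 1, 0, 0, 1, 0, 1],  -- g₃₁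
    ![0, 1, 0, 0, 0, 0, 0, 0, 0, 1],  -- g₂₁
    ![0, 0, 1, 0, 0, 0, 0, 0, 0, 1],  -- g₃₂
    ![1, 0, 0, 0, 0, 0, 0, 0, 0, 1]]  -- g₁₃

/-- The real versions of the nine generators. -/
noncomputable def cbGensR (i : Fin 9) : Fin 10 → ℝ := fun t => (cbGens i t : ℝ)

/-- The polyhedral cone `C ⊆ ℝ¹⁰` generated by the nine vectors. -/
def coneC : Set (Fin 10 → ℝ) :=
  {y | ∃ c : Fin 9 → ℝ, (∀ i, 0 ≤ c i) ∧ y = ∑ i : Fin 9, c i • cbGensR i}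

/-- The set `D = {(x, L) ∈ C ∩ ℤ¹⁰ : ∂₂(x) = σ(∂₃(x))}`, i.e. the lattice points of `C`
whose `ℤ⁹`-part satisfies `b₁+b₂ = c₃+a₁` and `b₃+c₁ = c₁+c₂` (the semigroup
`BZ*₍₁,₁₎` of the once-punctured genus-one graph). -/
def Dgenus1 : Set (Fin 10 → ℤ) :=
  {z | ((fun t => (z t : ℝ)) ∈ coneC) ∧ z 1 + z 5 = z 8 + z 0 ∧ z 6 + z 2 = z 2 + z 7}

/-!
In a nonnegative real representation of a point of `C`, the coefficients of `g₁₃, g₂₁, g₃₂` are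
`a₁, b₁, c₁`, those of `g_S, g_T, g₁₂, g₂₃, g₃₁` are fixed by `a₂, a₃, b₂, b₃, c₂, c₃` up to one free
parameter (the coefficient of `g_S`, at most `min a₂ b₂ c₂`), and `g_X` makes up the level. So an
integer point of `C` has nonnegative coordinates, satisfies `a₂ + a₃ = b₃ + c₂`,
`a₂ + c₃ = b₂ + b₃` and `a₁ + b₁ + c₁ + b₂ + b₃ + c₂ ≤ L + min a₂ b₂ c₂`. Together with the
equations of `D` this writes every point of `D` as a nonnegative integer combination of
`g_X, g₂₃, g₃₂` (level 1), `g_S + g_T, g₁₂ + g₃₁, g₂₁ + g₁₃` (level 2) and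
`g_T + g₃₁ + g₂₁, g_S + g₁₂ + g₁₃` (level 3), the last two with coefficients `(b₃ - a₂)⁺` and
`(a₂ - b₃)⁺`.
-/

lemma cast_mem_coneC_of_mem_closure {v : Fin 10 → ℤ}
    (hv : v ∈ AddSubmonoid.closure (Set.range cbGens)) : (fun t => (v t : ℝ)) ∈ coneC := by
  induction hv using AddSubmonoid.closure_induction with
  | mem v hv =>
    obtain ⟨i, rfl⟩ := hv
    refine ⟨Pi.single i 1, fun j => ?_, ?_⟩
    · by_cases h : j = i <;> simp [h]
    · simp only [Pi.single_apply, ite_smul, one_smul, zero_smul, Finset.sum_ite_eq',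
        Finset.mem_univ, if_true]
      rfl
  | zero => exact ⟨0, fun _ => le_rfl, by ext; simp⟩
  | add v w _ _ hv hw =>
    obtain ⟨a, ha, hav⟩ := hv
    obtain ⟨b, hb, hbw⟩ := hw
    refine ⟨a + b, fun i => add_nonneg (ha i) (hb i), ?_⟩
    simp only [Pi.add_apply, add_smul, Finset.sum_add_distrib, ← hav, ← hbw]
    funext t; simp

lemma constraints_of_cast_mem_coneC {z : Fin 10 → ℤ} (hz : (fun t => (z t : ℝ)) ∈ coneC) :
    0 ≤ z 0 ∧ 0 ≤ z 1 ∧ 0 ≤ z 2 ∧ 0 ≤ z 3 ∧ 0 ≤ z 4 ∧ 0 ≤ z 5 ∧ 0 ≤ z 6 ∧ 0 ≤ z 7 ∧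
      0 ≤ z 8 ∧ z 3 + z 4 = z 6 + z 7 ∧ z 3 + z 8 = z 5 + z 6 ∧
      z 0 + z 1 + z 2 + z 5 + z 6 + z 7 ≤ z 9 + z 3 ∧
      z 0 + z 1 + z 2 + z 5 + z 6 + z 7 ≤ z 9 + z 5 ∧
      z 0 + z 1 + z 2 + z 5 + z 6 + z 7 ≤ z 9 + z 7 := by
  obtain ⟨c, hc, hzc⟩ := hz
  have h := congrFun hzc
  simp [Fin.forall_fin_succ, Fin.sum_univ_succ, cbGensR, cbGens] at h
  obtain ⟨e0, e1, e2, e3, e4, e5, e6, e7, e8, e9⟩ := h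
  rify
  refine ⟨?_, ?_, ?_, ?_, ?_, ?_, ?_, ?_, ?_, ?_, ?_, ?_, ?_, ?_⟩ <;>
    linarith [hc 0, hc 1, hc 2, hc 3, hc 4, hc 5, hc 6, hc 7, hc 8]

def lowLevelGens : Fin 8 → Fin 10 → ℤ :=
  ![cbGens 0, cbGens 4, cbGens 7, cbGens 1 + cbGens 2, cbGens 3 + cbGens 5,
    cbGens 6 + cbGens 8, cbGens 2 + cbGens 5 + cbGens 6, cbGens 1 + cbGens 3 + cbGens 8]

lemma lowLevelGens_mem_closure (i : Fin 8) :
    lowLevelGens i ∈ AddSubmonoid.closure (Set.range cbGens) := by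
  have g (j : Fin 9) : cbGens j ∈ AddSubmonoid.closure (Set.range cbGens) :=
    AddSubmonoid.subset_closure ⟨j, rfl⟩
  fin_cases i <;> simp only [lowLevelGens] <;> simp [add_mem, g]

lemma lowLevelGens_mem (i : Fin 8) :
    lowLevelGens i ∈ Dgenus1 ∧
      (lowLevelGens i 9 = 1 ∨ lowLevelGens i 9 = 2 ∨ lowLevelGens i 9 = 3) := by
  refine ⟨⟨cast_mem_coneC_of_mem_closure (lowLevelGens_mem_closure i), ?_⟩, ?_⟩ <;>
    fin_cases i <;> decide

lemma exists_eq_sum_zsmul_lowLevelGens {d : Fin 10 → ℤ} (hd : d ∈ Dgenus1) :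
    ∃ k : Fin 8 → ℤ, (∀ i, 0 ≤ k i) ∧ d = ∑ i, k i • lowLevelGens i := by
  obtain ⟨hC, hD₁, hD₂⟩ := hd
  obtain ⟨h0, h1, h2, h3, h4, h5, h6, h7, h8, hA, hB, i3, i5, i7⟩ := constraints_of_cast_mem_coneC hC
  obtain ⟨m, hm3, hm5, hm7, hm⟩ :
      ∃ m, m ≤ d 3 ∧ m ≤ d 5 ∧ m ≤ d 7 ∧ (m = d 3 ∨ m = d 5 ∨ m = d 7) :=
    ⟨min (d 3) (min (d 5) (d 7)), by omega, by omega, by omega, by omega⟩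
  refine ⟨![d 9 - (d 0 + d 1 + d 2 + d 5 + d 6 + d 7) + m, d 5 - m, d 2,
    m - max 0 (d 3 - d 6), min (d 3) (d 6) - m, min (d 0) (d 1), max 0 (d 6 - d 3),
    max 0 (d 3 - d 6)], fun i => ?_, ?_⟩
  · fin_cases i <;> simp <;> omega
  · ext t
    fin_cases t <;> simp [Finset.sum_apply, lowLevelGens, cbGens, Fin.sum_univ_succ] <;> omega

/-- The monoid `D` is generated by its elements of level `1`, `2` or `3`. -/
theorem stmt_12 (d : Fin 10 → ℤ) (hd : d ∈ Dgenus1) :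
    d ∈ AddSubmonoid.closure
      {z : Fin 10 → ℤ | z ∈ Dgenus1 ∧ (z 9 = 1 ∨ z 9 = 2 ∨ z 9 = 3)} := by
  obtain ⟨k, hk, rfl⟩ := exists_eq_sum_zsmul_lowLevelGens hd
  refine sum_mem fun i _ => ?_
  obtain ⟨n, hn⟩ := Int.eq_ofNat_of_zero_le (hk i)
  rw [hn, natCast_zsmul]
  exact nsmul_mem (AddSubmonoid.subset_closure (lowLevelGens_mem i : lowLevelGens i ∈ _)) n
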